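/- arXiv:2002.06051 — 7 statements merged into one kernel-verified Lean document; each statement's English description precedes it below -/
import Mathlib

section
/- For n ≥ 1, the roots of the polynomial χ_n(λ) = ((λ - i)^n + (λ + i)^n)/2 are exactly the real numbers λ_k = cot(π/(2n) + kπ/n) for k = 0, 1, ..., n-1. -/
open Complex Real

/-!
A root z satisfies (z - i)^n = -(z + i)^n, so |z - i| = |z + i| and z is real; write z = cot θ
with θ ∈ (0, π). By de Moivre, cot θ ± i = e^{±iθ} / sin θ, hence
(cot θ - i)^n + (cot θ + i)^n = 2 cos(nθ) / sinⁿ θ, and the zeros of cos(nθ) in (0, π) are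
exactly θ = (2k + 1)π / (2n) for k < n.
-/

theorem im_eq_zero_of_sub_I_pow_add_add_I_pow_eq_zero {z : ℂ} {n : ℕ}
    (h : (z - I) ^ n + (z + I) ^ n = 0) : z.im = 0 := by
  rcases Nat.eq_zero_or_pos n with rfl | hn
  · norm_num at h
  have hnorm : ‖z - I‖ = ‖z + I‖ := by
    refine (pow_left_inj₀ (norm_nonneg _) (norm_nonneg _) hn.ne').1 ?_
    rw [← norm_pow, ← norm_pow, eq_neg_of_add_eq_zero_left h, norm_neg]
  have hsq := congrArg (· ^ 2) hnorm
  simp only [Complex.sq_norm, Complex.normSq_apply, sub_re, sub_im, add_re, add_im, I_re,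
    I_im] at hsq
  linarith

theorem cot_sub_I_pow_add_cot_add_I_pow {θ : ℝ} (hθ : Real.sin θ ≠ 0) (n : ℕ) :
    ((Real.cot θ : ℂ) - I) ^ n + ((Real.cot θ : ℂ) + I) ^ n
      = ((2 * Real.cos (n * θ) / Real.sin θ ^ n : ℝ) : ℂ) := by
  have hθ' : Complex.sin θ ≠ 0 := by exact_mod_cast hθ
  have hsub : (Real.cot θ : ℂ) - I
      = (Complex.cos (-θ) + Complex.sin (-θ) * I) / Complex.sin θ := by
    rw [Real.cot_eq_cos_div_sin, Complex.cos_neg, Complex.sin_neg]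
    push_cast
    field_simp
    ring
  have hadd : (Real.cot θ : ℂ) + I = (Complex.cos θ + Complex.sin θ * I) / Complex.sin θ := by
    rw [Real.cot_eq_cos_div_sin]
    push_cast
    field_simp
  rw [hsub, hadd, div_pow, div_pow, cos_add_sin_mul_I_pow, cos_add_sin_mul_I_pow, mul_neg,
    Complex.cos_neg, Complex.sin_neg]
  push_cast
  ring

theorem cot_sub_I_pow_add_cot_add_I_pow_eq_zero_iff {θ : ℝ} (hθ : Real.sin θ ≠ 0) (n : ℕ) :
    ((Real.cot θ : ℂ) - I) ^ n + ((Real.cot θ : ℂ) + I) ^ n = 0 ↔ Real.cos (n * θ) = 0 := by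
  rw [cot_sub_I_pow_add_cot_add_I_pow hθ, ofReal_eq_zero, div_eq_zero_iff,
    or_iff_left (pow_ne_zero n hθ), mul_eq_zero, or_iff_right two_ne_zero]

theorem exists_mem_Ioo_cot_eq (x : ℝ) : ∃ θ ∈ Set.Ioo 0 π, Real.cot θ = x := by
  obtain ⟨hlo, hhi⟩ := Real.arctan_mem_Ioo x
  refine ⟨π / 2 - Real.arctan x, ⟨by linarith, by linarith⟩, ?_⟩
  rw [Real.cot_eq_cos_div_sin, Real.cos_pi_div_two_sub, Real.sin_pi_div_two_sub,
    ← Real.tan_eq_sin_div_cos, Real.tan_arctan]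

theorem mem_Ioo_and_cos_nat_mul_eq_zero_iff (n : ℕ) (θ : ℝ) :
    (θ ∈ Set.Ioo 0 π ∧ Real.cos (n * θ) = 0) ↔ ∃ k < n, θ = π / (2 * n) + k * π / n := by
  constructor
  · rintro ⟨⟨hθ0, hθπ⟩, hcos⟩
    have hn : (0 : ℝ) < n := by
      rcases n.eq_zero_or_pos with rfl | hn
      · simp at hcos
      · exact_mod_cast hn
    obtain ⟨m, hm⟩ := Real.cos_eq_zero_iff.1 hcos
    have hlo : (0 : ℝ) < 2 * m + 1 := by nlinarith [pi_pos, mul_pos hn hθ0]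
    have hhi : (2 * m + 1 : ℝ) < 2 * n := by nlinarith [pi_pos, mul_lt_mul_of_pos_left hθπ hn]
    have hm0 : 0 ≤ m := by
      have : (0 : ℤ) < 2 * m + 1 := by exact_mod_cast hlo
      omega
    lift m to ℕ using hm0
    have hmn : m < n := by
      have : 2 * m + 1 < 2 * n := by exact_mod_cast hhi
      omega
    refine ⟨m, hmn, ?_⟩
    field_simp
    push_cast at hm
    linarith
  · rintro ⟨k, hk, rfl⟩
    have hn : (0 : ℝ) < n := by exact_mod_cast (k.zero_le.trans_lt hk)
    have hk' : (2 * k + 1 : ℝ) < 2 * n := by exact_mod_cast (by omega : 2 * k + 1 < 2 * n)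
    have hθ : π / (2 * n) + k * π / n = (2 * k + 1) * π / (2 * n) := by
      field_simp
      ring
    rw [hθ]
    refine ⟨⟨by positivity, ?_⟩, Real.cos_eq_zero_iff.2 ⟨k, ?_⟩⟩
    · rw [div_lt_iff₀ (by positivity)]
      nlinarith [pi_pos]
    · field_simp
      push_cast
      ring

theorem roots_of_chi_general (n : ℕ) (z : ℂ) :
    ((z - Complex.I) ^ n + (z + Complex.I) ^ n) / 2 = 0 ↔
      ∃ k < n, z = (Real.cot (π / (2 * n) + k * π / n) : ℂ) := by
  rw [div_eq_zero_iff, or_iff_left two_ne_zero]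
  constructor
  · intro hz
    obtain ⟨θ, hθ, hcot⟩ := exists_mem_Ioo_cot_eq z.re
    obtain rfl : z = (Real.cot θ : ℂ) := by
      rw [hcot]
      exact Complex.ext rfl (im_eq_zero_of_sub_I_pow_add_add_I_pow_eq_zero hz)
    rw [cot_sub_I_pow_add_cot_add_I_pow_eq_zero_iff (sin_pos_of_mem_Ioo hθ).ne'] at hz
    obtain ⟨k, hk, rfl⟩ := (mem_Ioo_and_cos_nat_mul_eq_zero_iff n θ).1 ⟨hθ, hz⟩
    exact ⟨k, hk, rfl⟩
  · rintro ⟨k, hk, rfl⟩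
    obtain ⟨hθ, hcos⟩ := (mem_Ioo_and_cos_nat_mul_eq_zero_iff n _).2 ⟨k, hk, rfl⟩
    rwa [cot_sub_I_pow_add_cot_add_I_pow_eq_zero_iff (sin_pos_of_mem_Ioo hθ).ne']

/-- The roots of χ_n(λ) = ((λ-i)^n + (λ+i)^n)/2 are exactly the real numbers
cot(π/(2n) + kπ/n), k = 0, …, n-1. -/
theorem roots_of_chi (n : ℕ) (hn : 1 ≤ n) (z : ℂ) :
    ((z - Complex.I) ^ n + (z + Complex.I) ^ n) / 2 = 0 ↔
      ∃ k < n, z = (Real.cot (π / (2 * n) + k * π / n) : ℂ) :=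
  roots_of_chi_general n z
end

section
/- Let A_n be the n×n Hermitian matrix with zero diagonal, entries i above the diagonal and -i below the diagonal (i the imaginary unit). Then the eigenvalues of A_n are cot(π/(2n) + kπ/n) for k = 0, ..., n-1, and consequently Tr(A_n^{2m}) = Σ_{k=0}^{n-1} cot^{2m}(π/(2n) + kπ/n) while Tr(A_n^{2m+1}) = 0 for all m ≥ 0. -/
open Complex Real Matrix Polynomial

def skewMat (n : ℕ) : Matrix (Fin n) (Fin n) ℂ :=
  fun j k => if j < k then Complex.I else if k < j then -Complex.I else 0

/-!
If `ω ^ n = -1`, summing two geometric series shows that the row vector `(ω ^ j)_j` is a left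
eigenvector of `skewMat n` with eigenvalue `(ω + 1) / (i (1 - ω))`, which is `cot θ` for
`ω = exp (2 i θ)`. The odd powers `ζ, ζ³, …, ζ^(2n-1)` of `ζ = exp (π i / n)` are `n` distinct such
`ω`, so their Vandermonde matrix is invertible and conjugates `skewMat n` to the diagonal matrix of
the cotangents; this gives the characteristic polynomial and the traces of all powers. The odd
traces vanish because `skewMat n` is antisymmetric.
-/

namespace Matrix

variable {ι R : Type*} [Fintype ι] [DecidableEq ι] [CommRing R]

theorem exists_eq_units_inv_mul_diagonal_mul {A P : Matrix ι ι R} {d : ι → R} (hP : IsUnit P)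
    (h : P * A = diagonal d * P) :
    ∃ U : (Matrix ι ι R)ˣ, A = (↑U⁻¹ : Matrix ι ι R) * diagonal d * (U : Matrix ι ι R) := by
  obtain ⟨U, rfl⟩ := hP
  refine ⟨U, ?_⟩
  rw [mul_assoc, ← h, ← mul_assoc, Units.inv_mul, one_mul]

theorem charpoly_eq_prod_of_mul_eq_diagonal_mul {A P : Matrix ι ι R} {d : ι → R} (hP : IsUnit P)
    (h : P * A = diagonal d * P) : A.charpoly = ∏ i, (X - C (d i)) := by
  obtain ⟨U, rfl⟩ := exists_eq_units_inv_mul_diagonal_mul hP h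
  rw [charpoly_mul_comm, ← mul_assoc, Units.mul_inv, one_mul, charpoly_diagonal]

theorem trace_pow_eq_sum_of_mul_eq_diagonal_mul {A P : Matrix ι ι R} {d : ι → R} (hP : IsUnit P)
    (h : P * A = diagonal d * P) (m : ℕ) : trace (A ^ m) = ∑ i, d i ^ m := by
  obtain ⟨U, rfl⟩ := exists_eq_units_inv_mul_diagonal_mul hP h
  rw [Units.conj_pow', trace_mul_comm, ← mul_assoc, Units.mul_inv, one_mul, diagonal_pow,
    trace_diagonal]
  rfl

theorem trace_pow_odd_eq_zero_of_transpose_eq_neg [NoZeroDivisors R] [CharZero R]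
    {A : Matrix ι ι R} (hA : Aᵀ = -A) (m : ℕ) : trace (A ^ (2 * m + 1)) = 0 := by
  rw [← self_eq_neg]
  calc trace (A ^ (2 * m + 1)) = trace ((Aᵀ) ^ (2 * m + 1)) := by
        rw [← transpose_pow, trace_transpose]
    _ = -trace (A ^ (2 * m + 1)) := by rw [hA, Odd.neg_pow ⟨m, rfl⟩, trace_neg]

end Matrix

theorem skewMat_transpose (n : ℕ) : (skewMat n)ᵀ = -skewMat n := by
  ext j k
  simp only [transpose_apply, Matrix.neg_apply, skewMat]
  split_ifs <;> first | simp | order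

theorem sum_pow_mul_skewMat {n : ℕ} {ω : ℂ} (hω : ω ^ n = -1) (k : Fin n) :
    ∑ j : Fin n, ω ^ (j : ℕ) * skewMat n j k = (ω + 1) / (I * (1 - ω)) * ω ^ (k : ℕ) := by
  have hω1 : ω ≠ 1 := by
    rintro rfl
    norm_num at hω
  have hk := k.isLt
  set g : ℕ → ℂ := fun j => ω ^ j * if j < (k : ℕ) then I else if (k : ℕ) < j then -I else 0
  calc ∑ j : Fin n, ω ^ (j : ℕ) * skewMat n j k = ∑ j ∈ Finset.range n, g j := by
        rw [← Fin.sum_univ_eq_sum_range]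
        rfl
    _ = ∑ j ∈ Finset.range k, I * ω ^ j - ∑ j ∈ Finset.Ico ((k : ℕ) + 1) n, I * ω ^ j := by
        have below : ∀ j ∈ Finset.range k, g j = I * ω ^ j := fun j hj => by
          simp [g, Finset.mem_range.mp hj, mul_comm]
        have above : ∀ j ∈ Finset.Ico ((k : ℕ) + 1) n, g j = -(I * ω ^ j) := fun j hj => by
          have hkj : (k : ℕ) < j := (Finset.mem_Ico.mp hj).1
          simp [g, hkj, hkj.not_gt, mul_comm]
        rw [← Finset.sum_range_add_sum_Ico _ hk.le, Finset.sum_eq_sum_Ico_succ_bot hk,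
          Finset.sum_congr rfl below, Finset.sum_congr rfl above, Finset.sum_neg_distrib]
        simp [g, sub_eq_add_neg]
    _ = _ := by
        rw [← Finset.mul_sum, ← Finset.mul_sum, geom_sum_eq hω1, geom_sum_Ico hω1 hk, hω, pow_succ]
        have : ω - 1 ≠ 0 := sub_ne_zero.mpr hω1
        have : 1 - ω ≠ 0 := sub_ne_zero.mpr hω1.symm
        field_simp
        linear_combination (ω ^ (k : ℕ) - ω ^ ((k : ℕ) + 2)) * I_sq

theorem vandermonde_mul_skewMat {n : ℕ} {ω : Fin n → ℂ} (hω : ∀ k, ω k ^ n = -1) :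
    vandermonde ω * skewMat n =
      diagonal (fun k => (ω k + 1) / (I * (1 - ω k))) * vandermonde ω := by
  ext k l
  rw [mul_apply, diagonal_mul]
  exact sum_pow_mul_skewMat (hω k) l

namespace IsPrimitiveRoot

variable {R : Type*} [CommRing R] {ζ : R} {n : ℕ}

theorem pow_odd_pow_eq_neg_one [IsDomain R] (hζ : IsPrimitiveRoot ζ (2 * n)) (hn : n ≠ 0)
    (k : ℕ) : (ζ ^ (2 * k + 1)) ^ n = -1 := by
  have hζn := hζ.pow_of_dvd hn (dvd_mul_left n 2)
  rw [Nat.mul_div_cancel _ (Nat.pos_of_ne_zero hn)] at hζn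
  rw [← pow_mul, mul_comm, pow_mul, hζn.eq_neg_one_of_two_right, Odd.neg_one_pow ⟨k, rfl⟩]

theorem injective_pow_odd (hζ : IsPrimitiveRoot ζ (2 * n)) :
    Function.Injective fun k : Fin n => ζ ^ (2 * (k : ℕ) + 1) := fun k l hkl =>
  Fin.ext <| by have := hζ.pow_inj (by omega) (by omega) hkl; omega

end IsPrimitiveRoot

theorem ofReal_cot_eq_exp_ratio (n k : ℕ) :
    (Real.cot (π / (2 * n) + k * π / n) : ℂ) =
      (exp (2 * π * I / ↑(2 * n)) ^ (2 * k + 1) + 1) /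
        (I * (1 - exp (2 * π * I / ↑(2 * n)) ^ (2 * k + 1))) := by
  have : exp (2 * π * I / ↑(2 * n)) ^ (2 * k + 1) =
      exp (2 * I * ↑(π / (2 * n) + k * π / n)) := by
    rw [← Complex.exp_nat_mul]
    push_cast
    ring_nf
  rw [this, ofReal_cot, cot_eq_exp_ratio]

/-- The eigenvalues of `skewMat n` are cot(π/(2n)+kπ/n), k = 0,…,n-1, hence the
traces of its even powers are the corresponding cotangent power sums and the traces
of its odd powers vanish. -/
theorem skewMat_eigenvalues_and_traces (n : ℕ) (hn : 1 ≤ n) :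
    (skewMat n).charpoly =
        ∏ k ∈ Finset.range n, (X - C (Real.cot (π / (2 * n) + k * π / n) : ℂ)) ∧
    (∀ m : ℕ, Matrix.trace (skewMat n ^ (2 * m)) =
        ((∑ k ∈ Finset.range n, Real.cot (π / (2 * n) + k * π / n) ^ (2 * m) : ℝ) : ℂ)) ∧
    (∀ m : ℕ, Matrix.trace (skewMat n ^ (2 * m + 1)) = 0) := by
  have hζ : IsPrimitiveRoot (exp (2 * π * I / ↑(2 * n))) (2 * n) :=
    isPrimitiveRoot_exp _ (by omega)
  have hP : IsUnit (vandermonde fun k : Fin n => exp (2 * π * I / ↑(2 * n)) ^ (2 * (k : ℕ) + 1)) :=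
    (isUnit_iff_isUnit_det _).mpr (det_vandermonde_ne_zero_iff.mpr hζ.injective_pow_odd).isUnit
  have hdiag := vandermonde_mul_skewMat fun k : Fin n => hζ.pow_odd_pow_eq_neg_one (by omega) k
  simp only [← ofReal_cot_eq_exp_ratio] at hdiag
  refine ⟨?_, fun m => ?_, trace_pow_odd_eq_zero_of_transpose_eq_neg (skewMat_transpose n)⟩
  · rw [charpoly_eq_prod_of_mul_eq_diagonal_mul hP hdiag,
      Fin.prod_univ_eq_prod_range (fun k => X - C (Real.cot (π / (2 * n) + k * π / n) : ℂ))]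
  · rw [trace_pow_eq_sum_of_mul_eq_diagonal_mul hP hdiag, ofReal_sum,
      ← Fin.sum_univ_eq_sum_range]
    norm_cast
end

section
/- Let π be a noncrossing partition of {1,...,2n} and B an inner odd block of π. Then the padding interval I(B) = [min B, max B] has odd cardinality, min B and max B have the same parity, and exactly one of the two outer intervals [1, min B - 1] and [max B + 1, 2n] has odd cardinality. -/
/-!
A block meeting `[min B, max B]` other than `B` must lie strictly inside it, or it would cross `B`;
it is then nested in `B`, so it is even because `B` is inner odd. Hence `[min B, max B]` is the
odd block `B` together with even blocks, so it is odd; the parity statements follow because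
`[1, 2n]` splits into `[1, min B - 1]`, `[min B, max B]` and `[max B + 1, 2n]` and is even.
-/

open Finset

/-- Two distinct blocks cross if they interlace as `i < j < k < l` with `i,k` in one
block and `j,l` in the other. -/
def IsNoncrossing {s : Finset ℕ} (P : Finpartition s) : Prop :=
  ∀ B ∈ P.parts, ∀ B' ∈ P.parts, B ≠ B' →
    ¬ ∃ i j k l : ℕ, i ∈ B ∧ k ∈ B ∧ j ∈ B' ∧ l ∈ B' ∧ i < j ∧ j < k ∧ k < l

/-- `B'` is nested inside `B`: `min B < min B' ≤ max B' < max B`. -/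
def Nested (B' B : Finset ℕ) : Prop :=
  (∀ x ∈ B', ∃ a ∈ B, a < x) ∧ (∀ x ∈ B', ∃ b ∈ B, x < b)

/-- An inner odd block: an odd block with no other odd block nested inside it. -/
def InnerOdd {s : Finset ℕ} (P : Finpartition s) (B : Finset ℕ) : Prop :=
  B ∈ P.parts ∧ Odd B.card ∧
    ∀ B' ∈ P.parts, B' ≠ B → Odd B'.card → ¬ Nested B' B

theorem Finpartition.card_eq_sum_card_inter {α : Type*} [DecidableEq α] {s t : Finset α}
    (P : Finpartition s) (ht : t ⊆ s) : #t = ∑ C ∈ P.parts, #(C ∩ t) := by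
  rw [← (P.restrict ht).sum_card_parts, P.sum_restrict ht card card_empty]
  rfl

theorem nested_of_subset_Ioo {B C : Finset ℕ} {a b : ℕ} (ha : a ∈ B) (hb : b ∈ B)
    (hC : C ⊆ Ioo a b) : Nested C B :=
  ⟨fun _ hx => ⟨a, ha, (mem_Ioo.1 (hC hx)).1⟩, fun _ hx => ⟨b, hb, (mem_Ioo.1 (hC hx)).2⟩⟩

namespace IsNoncrossing

variable {s : Finset ℕ} {P : Finpartition s} {B C : Finset ℕ}

theorem subset_Ioo_of_lt_of_lt (hP : IsNoncrossing P) (hB : B ∈ P.parts) (hC : C ∈ P.parts)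
    (hCB : C ≠ B) {a b p : ℕ} (ha : a ∈ B) (hb : b ∈ B) (hp : p ∈ C) (hap : a < p)
    (hpb : p < b) : C ⊆ Ioo a b := by
  intro q hq
  have hqB : q ∉ B := disjoint_left.1 (P.disjoint hC hB hCB) hq
  rcases lt_trichotomy q a with hqa | rfl | haq
  · exact absurd ⟨q, a, p, b, hq, hp, ha, hb, hqa, hap, hpb⟩ (hP C hC B hB hCB)
  · exact absurd ha hqB
  rcases lt_trichotomy q b with hqb | rfl | hbq
  · exact mem_Ioo.2 ⟨haq, hqb⟩
  · exact absurd hb hqB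
  · exact absurd ⟨a, p, b, q, ha, hb, hp, hq, hap, hpb, hbq⟩ (hP B hB C hC hCB.symm)

theorem subset_Ioo_min'_max' (hP : IsNoncrossing P) (hB : B ∈ P.parts) (hC : C ∈ P.parts)
    (hCB : C ≠ B) (hne : B.Nonempty) {p : ℕ} (hp : p ∈ C)
    (hpI : p ∈ Icc (B.min' hne) (B.max' hne)) : C ⊆ Ioo (B.min' hne) (B.max' hne) := by
  have hpB : p ∉ B := disjoint_left.1 (P.disjoint hC hB hCB) hp
  obtain ⟨hmin, hmax⟩ := mem_Icc.1 hpI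
  refine hP.subset_Ioo_of_lt_of_lt hB hC hCB (B.min'_mem hne) (B.max'_mem hne) hp ?_ ?_
  · exact hmin.lt_of_ne (by rintro rfl; exact hpB (B.min'_mem hne))
  · exact hmax.lt_of_ne (by rintro rfl; exact hpB (B.max'_mem hne))

end IsNoncrossing

theorem InnerOdd.odd_card_Icc_min'_max' {a b : ℕ} {P : Finpartition (Icc a b)}
    {B : Finset ℕ} (hB : InnerOdd P B) (hP : IsNoncrossing P) (hne : B.Nonempty) :
    Odd #(Icc (B.min' hne) (B.max' hne)) := by
  obtain ⟨hBP, hBodd, hinner⟩ := hB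
  set I := Icc (B.min' hne) (B.max' hne)
  have hIab : I ⊆ Icc a b := Icc_subset_Icc (mem_Icc.1 (P.le hBP (B.min'_mem hne))).1
    (mem_Icc.1 (P.le hBP (B.max'_mem hne))).2
  have hBI : B ∩ I = B := inter_eq_left.2 fun x hx => mem_Icc.2 ⟨B.min'_le x hx, B.le_max' x hx⟩
  have heven : ∀ C ∈ P.parts, C ≠ B → Even #(C ∩ I) := by
    intro C hC hCB
    obtain hempty | ⟨p, hp⟩ := (C ∩ I).eq_empty_or_nonempty
    · simp [hempty]
    have hCI := hP.subset_Ioo_min'_max' hBP hC hCB hne (mem_inter.1 hp).1 (mem_inter.1 hp).2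
    rw [inter_eq_left.2 (hCI.trans Ioo_subset_Icc_self)]
    exact Nat.not_odd_iff_even.1 fun hodd =>
      hinner C hC hCB hodd (nested_of_subset_Ioo (B.min'_mem hne) (B.max'_mem hne) hCI)
  rw [P.card_eq_sum_card_inter hIab, ← add_sum_erase _ _ hBP, hBI]
  exact hBodd.add_even (even_sum _ fun C hC => heven C (mem_of_mem_erase hC) (ne_of_mem_erase hC))

theorem Nat.odd_card_Icc_iff {m M : ℕ} (h : m ≤ M) : Odd #(Icc m M) ↔ m % 2 = M % 2 := by
  rw [Nat.card_Icc, Nat.odd_iff]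
  omega

theorem xor_odd_card_Icc_of_odd_card_Icc {m M N : ℕ} (hm : 1 ≤ m) (hmM : m ≤ M) (hMN : M ≤ N)
    (hN : Even N) (hodd : Odd #(Icc m M)) :
    Xor (Odd #(Icc 1 (m - 1))) (Odd #(Icc (M + 1) N)) := by
  obtain ⟨k, rfl⟩ := hN
  simp only [Xor, Nat.odd_iff, Nat.card_Icc] at hodd ⊢
  omega

/-- For an inner odd block `B` of a noncrossing partition of `{1,…,2n}`, the padding
interval `[min B, max B]` is odd, `min B` and `max B` have the same parity, and exactly
one of the outer intervals `[1, min B - 1]` and `[max B + 1, 2n]` is odd. -/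
theorem innerOdd_padding_interval (n : ℕ) (P : Finpartition (Finset.Icc 1 (2 * n)))
    (hP : IsNoncrossing P) (B : Finset ℕ) (hB : InnerOdd P B) (hne : B.Nonempty) :
    Odd (Finset.Icc (B.min' hne) (B.max' hne)).card ∧
    B.min' hne % 2 = B.max' hne % 2 ∧
    Xor' (Odd (Finset.Icc 1 (B.min' hne - 1)).card)
         (Odd (Finset.Icc (B.max' hne + 1) (2 * n)).card) := by
  have hodd := hB.odd_card_Icc_min'_max' hP hne
  have hmin := mem_Icc.1 (P.le hB.1 (B.min'_mem hne))
  have hmax := mem_Icc.1 (P.le hB.1 (B.max'_mem hne))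
  have hle := B.min'_le _ (B.max'_mem hne)
  exact ⟨hodd, (Nat.odd_card_Icc_iff hle).1 hodd,
    xor_odd_card_Icc_of_odd_card_Icc hmin.1 hle hmax.2 (even_two_mul n) hodd⟩
end

section
/- Let π be a noncrossing partition of {1,...,2n} such that π ∨ 1̂₂ⁿ = 1̂_{2n}, where 1̂₂ⁿ is the pair partition {(1,2),(3,4),...,(2n-1,2n)} and the join is taken in the lattice of noncrossing partitions. If π has two inner odd blocks that are both intersected by a common pair (2k-1, 2k) of 1̂₂ⁿ, then every other block of π has even cardinality. -/
open Finset

/-- The join of `P` with the standard pair partition `{(1,2),(3,4),…,(2n-1,2n)}`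
is the one-block partition, i.e. the equivalence relation generated by the blocks of
`P` together with the standard braces relates any two elements of `{1,…,2n}`. -/
def JoinWithBracesIsTop (n : ℕ) (P : Finpartition (Finset.Icc 1 (2 * n))) : Prop :=
  ∀ a ∈ Finset.Icc 1 (2 * n), ∀ b ∈ Finset.Icc 1 (2 * n),
    Relation.EqvGen
      (fun x y => (∃ B ∈ P.parts, x ∈ B ∧ y ∈ B) ∨
        (∃ k : ℕ, 1 ≤ k ∧ k ≤ n ∧
          ((x = 2 * k - 1 ∧ y = 2 * k) ∨ (x = 2 * k ∧ y = 2 * k - 1)))) a b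

/-!
Say the brace `(a, a + 1)` joins the inner odd blocks `B₁ ∋ a` and `B₂ ∋ a + 1`. By noncrossing,
`B₁` cannot reach beyond `a` and `B₂` cannot reach below `a + 1`, since otherwise the other odd
block would be nested inside it. So `B₁` spans `[m, a]` and `B₂` spans `[a + 1, M]`, and every
other block meeting either span lies strictly inside it, hence is even. Counting, `[m, a]` and
`[a + 1, M]` have odd size, so `m` is odd and `M` even. Then `[m, M]` is a union of blocks and of
braces, and since `π ∨ 1̂₂ⁿ` has one block it is all of `{1, …, 2n}`: every block other than `B₁`,
`B₂` sits inside one of the two spans and is even.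
-/

theorem Finpartition.odd_card_of_even_card_inter {α : Type*} [DecidableEq α] {s t B : Finset α}
    (P : Finpartition s) (ht : t ⊆ s) (hB : B ∈ P.parts) (hodd : Odd #(B ∩ t))
    (heven : ∀ C ∈ P.parts, C ≠ B → Even #(C ∩ t)) : Odd #t := by
  have hsum := (P.restrict ht).sum_card_parts
  rw [P.sum_restrict ht card card_empty] at hsum
  rw [← hsum, ← add_sum_erase _ _ hB]
  exact hodd.add_even
    (even_sum _ fun C hC => heven C (mem_of_mem_erase hC) (ne_of_mem_erase hC))

section Noncrossing

variable {s : Finset ℕ} {P : Finpartition s} {B B₁ B₂ C D : Finset ℕ}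
  {a m M x y z : ℕ}

theorem IsNoncrossing.subset_Ioo_of_mem_Icc (hP : IsNoncrossing P) (hC : C ∈ P.parts)
    (hD : D ∈ P.parts) (hCD : C ≠ D) (hx : x ∈ D) (hy : y ∈ D) (hz : z ∈ C)
    (hzxy : z ∈ Icc x y) : C ⊆ Ioo x y := by
  have sep : ∀ {u v}, u ∈ C → v ∈ D → u ≠ v := fun hu hv huv =>
    hCD (P.eq_of_mem_parts hC hD hu (huv ▸ hv))
  intro w hw
  have := sep hz hx; have := sep hz hy; have := sep hw hx; have := sep hw hy
  rw [mem_Icc] at hzxy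
  refine mem_Ioo.2 ⟨?_, ?_⟩
  · by_contra!
    exact hP C hC D hD hCD ⟨w, x, z, y, hw, hz, hx, hy, by omega, by omega, by omega⟩
  · by_contra!
    exact hP D hD C hC hCD.symm ⟨x, z, y, w, hx, hy, hz, hw, by omega, by omega, by omega⟩

theorem IsNoncrossing.subset_Icc_of_mem_Icc (hP : IsNoncrossing P) (hC : C ∈ P.parts)
    (hD : D ∈ P.parts) (hx : x ∈ D) (hy : y ∈ D) (hDxy : D ⊆ Icc x y) (hz : z ∈ C)
    (hzxy : z ∈ Icc x y) : C ⊆ Icc x y := by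
  rcases eq_or_ne C D with rfl | hCD
  · exact hDxy
  · exact (hP.subset_Ioo_of_mem_Icc hC hD hCD hx hy hz hzxy).trans Ioo_subset_Icc_self

theorem InnerOdd.even_card_of_subset_Ioo (hB : InnerOdd P B) (hC : C ∈ P.parts) (hx : x ∈ B)
    (hy : y ∈ B) (hCxy : C ⊆ Ioo x y) : Even #C := by
  have hCB : C ≠ B := fun h => lt_irrefl x (mem_Ioo.1 (hCxy (h ▸ hx))).1
  by_contra hCeven
  exact hB.2.2 C hC hCB (Nat.not_even_iff_odd.1 hCeven)
    ⟨fun w hw => ⟨x, hx, (mem_Ioo.1 (hCxy hw)).1⟩, fun w hw => ⟨y, hy, (mem_Ioo.1 (hCxy hw)).2⟩⟩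

theorem InnerOdd.le_of_succ_mem (hP : IsNoncrossing P) (h₁ : InnerOdd P B₁)
    (hB₂ : B₂ ∈ P.parts) (hodd : Odd #B₂) (hne : B₁ ≠ B₂) (ha₁ : a ∈ B₁) (ha₂ : a + 1 ∈ B₂)
    (hx : x ∈ B₁) : x ≤ a := by
  by_contra! hax
  have hsub := hP.subset_Ioo_of_mem_Icc hB₂ h₁.1 hne.symm ha₁ hx ha₂ (mem_Icc.2 ⟨by omega, hax⟩)
  exact Nat.not_even_iff_odd.2 hodd (h₁.even_card_of_subset_Ioo hB₂ ha₁ hx hsub)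

theorem InnerOdd.succ_le_of_mem (hP : IsNoncrossing P) (h₂ : InnerOdd P B₂)
    (hB₁ : B₁ ∈ P.parts) (hodd : Odd #B₁) (hne : B₁ ≠ B₂) (ha₁ : a ∈ B₁) (ha₂ : a + 1 ∈ B₂)
    (hy : y ∈ B₂) : a + 1 ≤ y := by
  by_contra! hya
  have hsub := hP.subset_Ioo_of_mem_Icc hB₁ h₂.1 hne hy ha₂ ha₁ (mem_Icc.2 ⟨by omega, by omega⟩)
  exact Nat.not_even_iff_odd.2 hodd (h₂.even_card_of_subset_Ioo hB₁ hy ha₂ hsub)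

theorem InnerOdd.odd_card_Icc (hP : IsNoncrossing P) (hB : InnerOdd P B) (hx : x ∈ B)
    (hy : y ∈ B) (hBxy : B ⊆ Icc x y) (hs : Icc x y ⊆ s) : Odd #(Icc x y) := by
  refine P.odd_card_of_even_card_inter hs hB.1 (by rw [inter_eq_left.2 hBxy]; exact hB.2.1)
    fun C hC hCB => ?_
  obtain hempty | ⟨z, hz⟩ := (C ∩ Icc x y).eq_empty_or_nonempty
  · simp [hempty]
  rw [mem_inter] at hz
  have hCxy := hP.subset_Ioo_of_mem_Icc hC hB.1 hCB hx hy hz.1 hz.2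
  rw [inter_eq_left.2 (hCxy.trans Ioo_subset_Icc_self)]
  exact hB.even_card_of_subset_Ioo hC hx hy hCxy

theorem IsNoncrossing.subset_Icc_of_adjacent_spans (hP : IsNoncrossing P) (hB₁ : B₁ ∈ P.parts)
    (hB₂ : B₂ ∈ P.parts) (hm : m ∈ B₁) (ha₁ : a ∈ B₁) (ha₂ : a + 1 ∈ B₂) (hM : M ∈ B₂)
    (hB₁sub : B₁ ⊆ Icc m a) (hB₂sub : B₂ ⊆ Icc (a + 1) M) (hC : C ∈ P.parts) (hx : x ∈ C) (hxI : x ∈ Icc m M) :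
    C ⊆ Icc m M := by
  have hma := (mem_Icc.1 (hB₁sub hm)).2
  have haM := (mem_Icc.1 (hB₂sub hM)).1
  rw [mem_Icc] at hxI
  rcases le_or_gt x a with hxa | hax
  · exact (hP.subset_Icc_of_mem_Icc hC hB₁ hm ha₁ hB₁sub hx (mem_Icc.2 ⟨hxI.1, hxa⟩)).trans
      (Icc_subset_Icc le_rfl (by omega))
  · exact (hP.subset_Icc_of_mem_Icc hC hB₂ ha₂ hM hB₂sub hx (mem_Icc.2 ⟨hax, hxI.2⟩)).trans
      (Icc_subset_Icc (by omega) le_rfl)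

end Noncrossing

theorem JoinWithBracesIsTop.of_invariant {n : ℕ} {P : Finpartition (Icc 1 (2 * n))}
    (hjoin : JoinWithBracesIsTop n P) {p : ℕ → Prop}
    (hblock : ∀ C ∈ P.parts, ∀ x ∈ C, ∀ y ∈ C, p x → p y)
    (hbrace : ∀ k, 1 ≤ k → k ≤ n → (p (2 * k - 1) ↔ p (2 * k)))
    {a b : ℕ} (ha : a ∈ Icc 1 (2 * n)) (hb : b ∈ Icc 1 (2 * n)) (hpa : p a) : p b := by
  have hequiv : Equivalence fun x y => (p x ↔ p y) :=
    ⟨fun _ => Iff.rfl, Iff.symm, Iff.trans⟩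
  refine (hequiv.eqvGen_iff.1 (Relation.EqvGen.mono ?_ a b (hjoin a ha b hb))).1 hpa
  rintro x y (⟨C, hC, hx, hy⟩ | ⟨k, hk1, hkn, ⟨rfl, rfl⟩ | ⟨rfl, rfl⟩⟩)
  · exact ⟨hblock C hC x hx y hy, hblock C hC y hy x hx⟩
  · exact hbrace k hk1 hkn
  · exact (hbrace k hk1 hkn).symm

theorem even_card_of_innerOdd_of_succ_mem {n a : ℕ} {P : Finpartition (Icc 1 (2 * n))}
    {B₁ B₂ B : Finset ℕ} (hP : IsNoncrossing P) (hjoin : JoinWithBracesIsTop n P)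
    (h₁ : InnerOdd P B₁) (h₂ : InnerOdd P B₂) (hne : B₁ ≠ B₂) (ha : Odd a) (ha₁ : a ∈ B₁)
    (ha₂ : a + 1 ∈ B₂) (hB : B ∈ P.parts) (hB₁ : B ≠ B₁) (hB₂ : B ≠ B₂) : Even #B := by
  set m := B₁.min' ⟨a, ha₁⟩
  set M := B₂.max' ⟨a + 1, ha₂⟩
  have hm : m ∈ B₁ := min'_mem _ _
  have hM : M ∈ B₂ := max'_mem _ _
  have hB₁sub : B₁ ⊆ Icc m a := fun x hx =>
    mem_Icc.2 ⟨min'_le _ _ hx, h₁.le_of_succ_mem hP h₂.1 h₂.2.1 hne ha₁ ha₂ hx⟩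
  have hB₂sub : B₂ ⊆ Icc (a + 1) M := fun y hy =>
    mem_Icc.2 ⟨h₂.succ_le_of_mem hP h₁.1 h₁.2.1 hne ha₁ ha₂ hy, le_max' _ _ hy⟩
  have hms := mem_Icc.1 (P.le h₁.1 hm)
  have hMs := mem_Icc.1 (P.le h₂.1 hM)
  have hma := (mem_Icc.1 (hB₁sub hm)).2
  have haM := (mem_Icc.1 (hB₂sub hM)).1
  have hm_odd := h₁.odd_card_Icc hP hm ha₁ hB₁sub (Icc_subset_Icc hms.1 (by omega))
  have hM_even := h₂.odd_card_Icc hP ha₂ hM hB₂sub (Icc_subset_Icc (by omega) hMs.2)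
  rw [Nat.card_Icc, Nat.odd_iff] at hm_odd hM_even
  rw [Nat.odd_iff] at ha
  obtain ⟨t, ht⟩ := P.nonempty_of_mem_parts hB
  have htI : t ∈ Icc m M := by
    refine hjoin.of_invariant (p := (· ∈ Icc m M)) (fun C hC x hx y hy hxI => ?_) ?_
      (P.le h₁.1 hm) (P.le hB ht) (mem_Icc.2 ⟨le_rfl, by omega⟩)
    · exact hP.subset_Icc_of_adjacent_spans h₁.1 h₂.1 hm ha₁ ha₂ hM hB₁sub hB₂sub hC hx hxI hy
    · intro k _ _
      simp only [mem_Icc]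
      omega
  rw [mem_Icc] at htI
  rcases le_or_gt t a with hta | hat
  · exact h₁.even_card_of_subset_Ioo hB hm ha₁
      (hP.subset_Ioo_of_mem_Icc hB h₁.1 hB₁ hm ha₁ ht (mem_Icc.2 ⟨htI.1, hta⟩))
  · exact h₂.even_card_of_subset_Ioo hB ha₂ hM
      (hP.subset_Ioo_of_mem_Icc hB h₂.1 hB₂ ha₂ hM ht (mem_Icc.2 ⟨hat, htI.2⟩))

/-- If a noncrossing partition of `{1,…,2n}` with `π ∨ 1̂₂ⁿ = 1̂₂ₙ` has two inner odd
blocks which are connected by a standard brace `(2k-1, 2k)`, then every other block of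
`π` is even. -/
theorem even_blocks_of_two_connected_innerOdd (n : ℕ)
    (P : Finpartition (Finset.Icc 1 (2 * n))) (hP : IsNoncrossing P)
    (hjoin : JoinWithBracesIsTop n P)
    (B₁ B₂ : Finset ℕ) (h₁ : InnerOdd P B₁) (h₂ : InnerOdd P B₂) (hne : B₁ ≠ B₂)
    (hconn : ∃ k : ℕ, 1 ≤ k ∧ k ≤ n ∧
      ((2 * k - 1 ∈ B₁ ∧ 2 * k ∈ B₂) ∨ (2 * k - 1 ∈ B₂ ∧ 2 * k ∈ B₁)))
    (B : Finset ℕ) (hB : B ∈ P.parts) (hB₁ : B ≠ B₁) (hB₂ : B ≠ B₂) :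
    Even B.card := by
  obtain ⟨k, hk, -, hbrace⟩ := hconn
  have hodd : Odd (2 * k - 1) := ⟨k - 1, by omega⟩
  have hsucc : 2 * k - 1 + 1 = 2 * k := by omega
  rcases hbrace with ⟨hk₁, hk₂⟩ | ⟨hk₂, hk₁⟩
  · exact even_card_of_innerOdd_of_succ_mem hP hjoin h₁ h₂ hne hodd hk₁ (hsucc ▸ hk₂) hB hB₁ hB₂
  · exact even_card_of_innerOdd_of_succ_mem hP hjoin h₂ h₁ hne.symm hodd hk₂ (hsucc ▸ hk₁) hB
      hB₂ hB₁
end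

section
/- For a noncrossing partition π of {1,...,n}, the Kreweras complement K(π) satisfies |K(π)| = n + 1 - |π|, where |·| denotes the number of blocks. -/
/-!
Place `i` at position `2i - 1` and `ī` at position `2i`. Noncrossing of `P ∪ Q` forbids a block of
`P` to separate two points of a block of `Q`; conversely, by maximality of `Q`, two even points that
no block of `P` separates can be joined, since merging them keeps `P ∪ Q` noncrossing. So two even
points lie in one block of `Q` exactly when `P` does not separate them. Count the blocks of `Q` by
their least elements: an even point `x` fails to be least precisely when the block of `P` through
`x - 1` ends there and avoids `1`, and every block of `P` other than the one through `1` arises in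
this way from its maximum. Hence `n - |Q| = |P| - 1`.
-/

open Finset

/-- A family of finite sets of naturals is noncrossing if no two distinct members
interlace. -/
def NCFamily (F : Finset (Finset ℕ)) : Prop :=
  ∀ B ∈ F, ∀ B' ∈ F, B ≠ B' →
    ¬ ∃ i j k l : ℕ, i ∈ B ∧ k ∈ B ∧ j ∈ B' ∧ l ∈ B' ∧ i < j ∧ j < k ∧ k < l

/-- `NCFamily F` unfolds to `∀ B ∈ F, ∀ B' ∈ F, B ≠ B' → ¬ Crosses B B'`. -/
def Crosses (B B' : Finset ℕ) : Prop :=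
  ∃ i j k l : ℕ, i ∈ B ∧ k ∈ B ∧ j ∈ B' ∧ l ∈ B' ∧ i < j ∧ j < k ∧ k < l

def Separates (B : Finset ℕ) (x y : ℕ) : Prop :=
  (∃ b ∈ B, x < b ∧ b < y) ∧ ∃ c ∈ B, c < x ∨ y < c

instance (B : Finset ℕ) (x y : ℕ) : Decidable (Separates B x y) := by
  unfold Separates; infer_instance

theorem not_crosses_singleton_left (a : ℕ) (B : Finset ℕ) : ¬ Crosses {a} B := by
  rintro ⟨i, j, k, l, hi, hk, -, -, hij, hjk, -⟩
  rw [mem_singleton] at hi hk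
  omega

theorem not_crosses_singleton_right (B : Finset ℕ) (a : ℕ) : ¬ Crosses B {a} := by
  rintro ⟨i, j, k, l, -, -, hj, hl, -, hjk, hkl⟩
  rw [mem_singleton] at hj hl
  omega

theorem Separates.crosses_or_crosses {B t : Finset ℕ} {x y : ℕ} (h : Separates B x y)
    (hx : x ∈ t) (hy : y ∈ t) : Crosses B t ∨ Crosses t B := by
  obtain ⟨⟨b, hb, hxb, hby⟩, c, hc, hc_lt | hc_gt⟩ := h
  · exact Or.inl ⟨c, x, b, y, hc, hb, hx, hy, hc_lt, hxb, hby⟩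
  · exact Or.inr ⟨x, b, y, c, hx, hy, hb, hc, hxb, hby, hc_gt⟩

theorem not_crosses_pair_left {B : Finset ℕ} {x y : ℕ} (hxy : x < y) (h : ¬ Separates B x y) :
    ¬ Crosses {x, y} B := by
  rintro ⟨i, j, k, l, hi, hk, hj, hl, hij, hjk, hkl⟩
  simp only [mem_insert, mem_singleton] at hi hk
  exact h ⟨⟨j, hj, by omega, by omega⟩, l, hl, Or.inr (by omega)⟩

theorem not_crosses_pair_right {B : Finset ℕ} {x y : ℕ} (hxy : x < y) (h : ¬ Separates B x y) :
    ¬ Crosses B {x, y} := by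
  rintro ⟨i, j, k, l, hi, hk, hj, hl, hij, hjk, hkl⟩
  simp only [mem_insert, mem_singleton] at hj hl
  exact h ⟨⟨k, hk, by omega, by omega⟩, i, hi, Or.inl (by omega)⟩

theorem subset_Icc_of_not_separates {B : Finset ℕ} {x y b : ℕ} (hb : b ∈ B) (hxb : x < b)
    (hby : b < y) (h : ¬ Separates B x y) : B ⊆ Icc x y := by
  intro c hc
  rw [mem_Icc]
  by_contra hc_out
  exact h ⟨⟨b, hb, hxb, hby⟩, c, hc, by omega⟩

namespace NCFamily

variable {F G : Finset (Finset ℕ)}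

theorem mono (hF : NCFamily F) (hGF : G ⊆ F) : NCFamily G :=
  fun B hB B' hB' hne => hF B (hGF hB) B' (hGF hB') hne

theorem not_separates (hF : NCFamily F) {B t : Finset ℕ} (hB : B ∈ F) (ht : t ∈ F) (hne : B ≠ t)
    {x y : ℕ} (hx : x ∈ t) (hy : y ∈ t) : ¬ Separates B x y := fun h =>
  (h.crosses_or_crosses hx hy).elim (hF B hB t ht hne) (hF t ht B hB hne.symm)

theorem insert (hF : NCFamily F) {A : Finset ℕ}
    (hA : ∀ B ∈ F, B ≠ A → ¬ Crosses A B ∧ ¬ Crosses B A) : NCFamily (insert A F) := by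
  intro B hB B' hB' hne
  rcases mem_insert.1 hB with rfl | hB <;> rcases mem_insert.1 hB' with hB'A | hB'
  · exact absurd hB'A.symm hne
  · exact (hA B' hB' hne.symm).1
  · exact hB'A ▸ (hA B hB (hB'A ▸ hne)).2
  · exact hF B hB B' hB' hne

theorem union_bot (hF : NCFamily F) (s : Finset ℕ) :
    NCFamily (F ∪ (⊥ : Finpartition s).parts) := by
  intro B hB B' hB' hne
  rcases mem_union.1 hB with hB | hB
  · rcases mem_union.1 hB' with hB' | hB'
    · exact hF B hB B' hB' hne
    · obtain ⟨a, -, rfl⟩ := Finpartition.mem_bot_iff.1 hB'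
      exact not_crosses_singleton_right B a
  · obtain ⟨a, -, rfl⟩ := Finpartition.mem_bot_iff.1 hB
    exact not_crosses_singleton_left a B'

end NCFamily

theorem Finpartition.card_parts_eq_card_filter {α : Type*} [LinearOrder α] {s : Finset α}
    (P : Finpartition s) : #P.parts = #{x ∈ s | ¬ ∃ y ∈ s, y < x ∧ P.part y = P.part x} := by
  symm
  refine card_bij (fun x _ => P.part x) (fun x hx => P.part_mem.2 (mem_filter.1 hx).1) ?_ ?_
  · intro x hx x' hx' heq
    rw [mem_filter] at hx hx'
    rcases lt_trichotomy x x' with hlt | heq' | hlt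
    · exact absurd ⟨x, hx.1, hlt, heq⟩ hx'.2
    · exact heq'
    · exact absurd ⟨x', hx'.1, hlt, heq.symm⟩ hx.2
  · intro t ht
    have hne := P.nonempty_of_mem_parts ht
    have hmin_part : P.part (t.min' hne) = t := P.part_eq_of_mem ht (t.min'_mem hne)
    refine ⟨t.min' hne, mem_filter.2 ⟨P.le ht (t.min'_mem hne), ?_⟩, hmin_part⟩
    rintro ⟨y, hy, hlt, hy_part⟩
    have hyt : y ∈ t := hmin_part ▸ hy_part ▸ P.mem_part hy
    exact absurd (t.min'_le y hyt) (not_le.2 hlt)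

namespace Finpartition

variable {α : Type*} [DecidableEq α] {s : Finset α}

def pairSingletons {x y : α} (hx : x ∈ s) (hy : y ∈ s) : Finpartition s :=
  (⊥ : Finpartition (s \ {x, y})).extend (insert_ne_empty x {y}) sdiff_disjoint
    (sdiff_union_of_subset (insert_subset hx (singleton_subset_iff.2 hy)))

theorem parts_pairSingletons {x y : α} (hx : x ∈ s) (hy : y ∈ s) :
    (pairSingletons hx hy).parts = insert {x, y} (⊥ : Finpartition (s \ {x, y})).parts :=
  rfl

theorem card_filter_notMem_add_one (P : Finpartition s) {a : α} (ha : a ∈ s) :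
    #{B ∈ P.parts | a ∉ B} + 1 = #P.parts := by
  have : {B ∈ P.parts | a ∉ B} = P.parts.erase (P.part a) := by
    ext B
    rw [mem_filter, mem_erase]
    constructor
    · rintro ⟨hB, haB⟩
      exact ⟨fun h => haB (h ▸ P.mem_part ha), hB⟩
    · rintro ⟨hne, hB⟩
      exact ⟨hB, fun haB => hne (P.part_eq_of_mem hB haB).symm⟩
  rw [this, card_erase_add_one (P.part_mem.2 ha)]

end Finpartition

theorem NCFamily.union_pairSingletons {F : Finset (Finset ℕ)} (hF : NCFamily F) {s : Finset ℕ}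
    {x y : ℕ} (hx : x ∈ s) (hy : y ∈ s) (hxy : x < y) (hsep : ∀ B ∈ F, ¬ Separates B x y) :
    NCFamily (F ∪ (Finpartition.pairSingletons hx hy).parts) := by
  rw [Finpartition.parts_pairSingletons, union_insert]
  refine (hF.union_bot _).insert fun B hB _ => ?_
  rcases mem_union.1 hB with hB | hB
  · exact ⟨not_crosses_pair_left hxy (hsep B hB), not_crosses_pair_right hxy (hsep B hB)⟩
  · obtain ⟨a, -, rfl⟩ := Finpartition.mem_bot_iff.1 hB
    exact ⟨not_crosses_singleton_right _ a, not_crosses_singleton_left a _⟩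

theorem Finpartition.not_separates_pred_min'_succ_max' {s : Finset ℕ} {P : Finpartition s}
    (hP : NCFamily P.parts) {B B' : Finset ℕ} (hB : B ∈ P.parts) (hB' : B' ∈ P.parts) :
    ¬ Separates B' (B.min' (P.nonempty_of_mem_parts hB) - 1)
      (B.max' (P.nonempty_of_mem_parts hB) + 1) := by
  set hne := P.nonempty_of_mem_parts hB
  rintro ⟨⟨b, hb, hb_gt, hb_lt⟩, c, hc, hc_out⟩
  by_cases hBB' : B' = B
  · subst hBB'
    have := B'.min'_le c hc
    have := B'.le_max' c hc
    omega
  have hb_ne : ∀ a ∈ B, b ≠ a := fun a ha hba => hBB' (P.eq_of_mem_parts hB' hB hb (hba ▸ ha))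
  have hb_min := hb_ne _ (B.min'_mem hne)
  have hb_max := hb_ne _ (B.max'_mem hne)
  refine hP.not_separates hB' hB hBB' (B.min'_mem hne) (B.max'_mem hne)
    ⟨⟨b, hb, by omega, by omega⟩, c, hc, by omega⟩

def odds (n : ℕ) : Finset ℕ := (Icc 1 n).image (fun i => 2 * i - 1)

def evens (n : ℕ) : Finset ℕ := (Icc 1 n).image (fun i => 2 * i)

theorem mem_odds {n x : ℕ} : x ∈ odds n ↔ x % 2 = 1 ∧ x ≤ 2 * n := by
  simp only [odds, mem_image, mem_Icc]
  constructor
  · rintro ⟨i, hi, rfl⟩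
    omega
  · intro hx
    exact ⟨(x + 1) / 2, by omega, by omega⟩

theorem mem_evens {n x : ℕ} : x ∈ evens n ↔ x % 2 = 0 ∧ 2 ≤ x ∧ x ≤ 2 * n := by
  simp only [evens, mem_image, mem_Icc]
  constructor
  · rintro ⟨i, hi, rfl⟩
    omega
  · intro hx
    exact ⟨x / 2, by omega, by omega⟩

theorem card_evens (n : ℕ) : #(evens n) = n := by
  rw [evens, card_image_of_injective _ (fun a b h => by omega), Nat.card_Icc, Nat.add_sub_cancel]

theorem disjoint_odds_evens (n : ℕ) : Disjoint (odds n) (evens n) :=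
  disjoint_left.2 fun x hx hx' => by
    rw [mem_odds] at hx
    rw [mem_evens] at hx'
    omega

section Kreweras

variable {n : ℕ} (P : Finpartition (odds n)) (Q : Finpartition (evens n))

theorem not_separates_of_mem_part (hPQ : NCFamily (P.parts ∪ Q.parts)) {t : Finset ℕ}
    (ht : t ∈ Q.parts) {x y : ℕ} (hx : x ∈ t) (hy : y ∈ t) {B : Finset ℕ} (hB : B ∈ P.parts) :
    ¬ Separates B x y := by
  have hBt : B ≠ t := by
    rintro rfl
    obtain ⟨b, hb⟩ := P.nonempty_of_mem_parts hB
    exact disjoint_left.1 (disjoint_odds_evens n) (P.le hB hb) (Q.le ht hb)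
  exact hPQ.not_separates (mem_union_left _ hB) (mem_union_right _ ht) hBt hx hy

theorem part_eq_part_of_not_separates (hP : NCFamily P.parts)
    (hmax : ∀ Q' : Finpartition (evens n), NCFamily (P.parts ∪ Q'.parts) → Q' ≤ Q)
    {x y : ℕ} (hx : x ∈ evens n) (hy : y ∈ evens n) (hxy : x < y)
    (hsep : ∀ B ∈ P.parts, ¬ Separates B x y) : Q.part x = Q.part y := by
  obtain ⟨t, ht, hpair⟩ :=
    hmax _ (hP.union_pairSingletons hx hy hxy hsep) (mem_insert_self {x, y} _)
  rw [Q.part_eq_of_mem ht (hpair (mem_insert_self x {y})),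
    Q.part_eq_of_mem ht (hpair (mem_insert_of_mem (mem_singleton_self y)))]

theorem part_eq_part_iff_forall_not_separates (hPQ : NCFamily (P.parts ∪ Q.parts))
    (hmax : ∀ Q' : Finpartition (evens n), NCFamily (P.parts ∪ Q'.parts) → Q' ≤ Q)
    {x y : ℕ} (hx : x ∈ evens n) (hy : y ∈ evens n) (hxy : x < y) :
    Q.part x = Q.part y ↔ ∀ B ∈ P.parts, ¬ Separates B x y :=
  ⟨fun h _ hB => not_separates_of_mem_part P Q hPQ (Q.part_mem.2 hx) (Q.mem_part hx)
      (h ▸ Q.mem_part hy) hB,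
    part_eq_part_of_not_separates P Q (hPQ.mono subset_union_left) hmax hx hy hxy⟩

theorem part_pred_subset_Ioo {x y : ℕ} (hx : x ∈ evens n) (hy : y ∈ evens n) (hyx : y < x)
    (hsep : ∀ B ∈ P.parts, ¬ Separates B y x) : P.part (x - 1) ⊆ Ioo y x := by
  rw [mem_evens] at hx hy
  have hx_pred : x - 1 ∈ odds n := mem_odds.2 ⟨by omega, by omega⟩
  have hIcc := subset_Icc_of_not_separates (P.mem_part hx_pred) (by omega) (by omega)
    (hsep _ (P.part_mem.2 hx_pred))
  intro c hc
  have hc_odd := (mem_odds.1 (P.part_subset _ hc)).1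
  have := mem_Icc.1 (hIcc hc)
  exact mem_Ioo.2 ⟨by omega, by omega⟩

theorem card_filter_exists_not_separates (hP : NCFamily P.parts) :
    #{x ∈ evens n | ∃ y ∈ evens n, y < x ∧ ∀ B ∈ P.parts, ¬ Separates B y x} =
      #{B ∈ P.parts | 1 ∉ B} := by
  refine card_bij' (fun x _ => P.part (x - 1))
    (fun B hB => B.max' (P.nonempty_of_mem_parts (mem_filter.1 hB).1) + 1) ?_ ?_ ?_ ?_
  · intro x hx
    obtain ⟨hx, y, hy, hyx, hsep⟩ := mem_filter.1 hx
    have hy_two := (mem_evens.1 hy).2.1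
    have hx_pred : x - 1 ∈ odds n := mem_odds.2 (by rw [mem_evens] at hx; omega)
    refine mem_filter.2 ⟨P.part_mem.2 hx_pred, fun h1 => ?_⟩
    have := mem_Ioo.1 (part_pred_subset_Ioo P hx hy hyx hsep h1)
    omega
  · intro B hB
    obtain ⟨hB, h1⟩ := mem_filter.1 hB
    have hne := P.nonempty_of_mem_parts hB
    have hmin := mem_odds.1 (P.le hB (B.min'_mem hne))
    have hmax := mem_odds.1 (P.le hB (B.max'_mem hne))
    have hmin_ne : B.min' hne ≠ 1 := fun h => h1 (h ▸ B.min'_mem hne)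
    have hmin_le := B.min'_le _ (B.max'_mem hne)
    refine mem_filter.2 ⟨mem_evens.2 (by omega), B.min' hne - 1, mem_evens.2 (by omega),
      by omega, fun B' hB' => P.not_separates_pred_min'_succ_max' hP hB hB'⟩
  · intro x hx
    obtain ⟨hx, y, hy, hyx, hsep⟩ := mem_filter.1 hx
    have hx_pred : x - 1 ∈ odds n := mem_odds.2 (by rw [mem_evens] at hx; omega)
    have hne : (P.part (x - 1)).Nonempty := ⟨x - 1, P.mem_part hx_pred⟩
    have hle := (P.part (x - 1)).le_max' _ (P.mem_part hx_pred)
    have hlt := mem_Ioo.1 (part_pred_subset_Ioo P hx hy hyx hsep (max'_mem _ hne))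
    omega
  · intro B hB
    rw [Nat.add_sub_cancel]
    exact P.part_eq_of_mem (mem_filter.1 hB).1 (max'_mem _ _)

end Kreweras

theorem kreweras_complement_card_general (n : ℕ) (hn : 1 ≤ n)
    (P : Finpartition ((Finset.Icc 1 n).image (fun i => 2 * i - 1)))
    (Q : Finpartition ((Finset.Icc 1 n).image (fun i => 2 * i)))
    (hPQ : NCFamily (P.parts ∪ Q.parts))
    (hmax : ∀ Q' : Finpartition ((Finset.Icc 1 n).image (fun i => 2 * i)),
      NCFamily (P.parts ∪ Q'.parts) → Q' ≤ Q) :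
    Q.parts.card = n + 1 - P.parts.card := by
  have hP : NCFamily P.parts := hPQ.mono subset_union_left
  have hQ : #Q.parts =
      #{x ∈ evens n | ¬ ∃ y ∈ evens n, y < x ∧ ∀ B ∈ P.parts, ¬ Separates B y x} := by
    rw [Q.card_parts_eq_card_filter]
    refine congrArg card (filter_congr fun x hx => not_congr <| exists_congr fun y =>
      and_congr_right fun hy => and_congr_right fun hyx => ?_)
    exact part_eq_part_iff_forall_not_separates P Q hPQ hmax hy hx hyx
  have hsplit := card_filter_add_card_filter_not (s := evens n)
    (p := fun x => ∃ y ∈ evens n, y < x ∧ ∀ B ∈ P.parts, ¬ Separates B y x)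
  rw [card_evens, card_filter_exists_not_separates P hP] at hsplit
  have hP_card := P.card_filter_notMem_add_one (mem_odds.2 ⟨rfl, by omega⟩ : 1 ∈ odds n)
  omega

/-- The Kreweras complement: if `P` is a noncrossing partition of the odd positions
`{1,3,…,2n-1}` (representing `{1,…,n}`) and `Q` is the maximal partition of the even
positions `{2,4,…,2n}` (representing `{1̄,…,n̄}`) such that `P ∪ Q` is noncrossing on
the interleaved set, then `|Q| = n + 1 - |P|`. -/
theorem kreweras_complement_card (n : ℕ) (hn : 1 ≤ n)
    (P : Finpartition ((Finset.Icc 1 n).image (fun i => 2 * i - 1)))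
    (Q : Finpartition ((Finset.Icc 1 n).image (fun i => 2 * i)))
    (hP : NCFamily P.parts)
    (hPQ : NCFamily (P.parts ∪ Q.parts))
    (hmax : ∀ Q' : Finpartition ((Finset.Icc 1 n).image (fun i => 2 * i)),
      NCFamily (P.parts ∪ Q'.parts) → Q' ≤ Q) :
    Q.parts.card = n + 1 - P.parts.card :=
  kreweras_complement_card_general n hn P Q hPQ hmax
end

section
/- Define h₂(α,β), h₃(α,β), h₄(α,β) as the 2×2, 3×3, 4×4 Hankel determinants det[K_{i+j}]_{1≤i,j≤n} built from the sequence K₁ = 2α, K₂ = 2β² + 10α², K₃ = 24α³, K₄ = 2β⁴ + 4α²β² + 66α⁴, K₅ = 160α⁵, K₆ = 2β⁶ + 6α²β⁴ + 6α⁴β² + 386α⁶, K₇ = 896α⁷, K₈ = 2β⁸ + 8α²β⁶ + 12α⁴β⁴ + 8α⁶β² + 2050α⁸. Then h₄(α,β) = -256α⁶(β² - 3α²)⁴(β² + α²)³, and if β² = 3α² then h₃(α,β) = -65536α¹². Consequently, for any real α ≠ 0 and real β, at least one of h₃(α,β), h₄(α,β) is negative. -/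
/-!
Both determinants are explicit polynomials in `α` and `β`. On the locus `β² = 3α²`, where the
factored `h₄` vanishes, the cofactor expansion of `h₃` collapses to `-2¹⁶ α¹²`; off it, every
factor of `h₄` other than `-256` is positive once `α ≠ 0`.
-/

open Matrix

/-- The free cumulants of `(α+iβ)X₁X₂ + (α-iβ)X₂X₁` for free standard semicircular
`X₁, X₂`. -/
noncomputable def cumul (α β : ℝ) : ℕ → ℝ
  | 1 => 2 * α
  | 2 => 2 * β ^ 2 + 10 * α ^ 2
  | 3 => 24 * α ^ 3
  | 4 => 2 * β ^ 4 + 4 * α ^ 2 * β ^ 2 + 66 * α ^ 4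
  | 5 => 160 * α ^ 5
  | 6 => 2 * β ^ 6 + 6 * α ^ 2 * β ^ 4 + 6 * α ^ 4 * β ^ 2 + 386 * α ^ 6
  | 7 => 896 * α ^ 7
  | 8 => 2 * β ^ 8 + 8 * α ^ 2 * β ^ 6 + 12 * α ^ 4 * β ^ 4 + 8 * α ^ 6 * β ^ 2
          + 2050 * α ^ 8
  | _ => 0

/-- The `n×n` Hankel determinant `det [K_{i+j}]_{1 ≤ i,j ≤ n}`. -/
noncomputable def hankel (α β : ℝ) (n : ℕ) : ℝ :=
  Matrix.det (Matrix.of fun i j : Fin n => cumul α β (i.val + j.val + 2))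

lemma hankel_four (α β : ℝ) :
    hankel α β 4 = -256 * α ^ 6 * (β ^ 2 - 3 * α ^ 2) ^ 4 * (β ^ 2 + α ^ 2) ^ 3 := by
  simp only [hankel, det_succ_row_zero, Fin.sum_univ_succ, of_apply, submatrix_apply,
    Fin.succAbove, det_fin_zero]
  norm_num [cumul, Fin.lt_def, Fin.succ]
  ring

lemma hankel_three (α β : ℝ) :
    hankel α β 3 = 32 * α ^ 2 * β ^ 10 - 352 * α ^ 4 * β ^ 8 - 320 * α ^ 6 * β ^ 6
      - 1600 * α ^ 8 * β ^ 4 - 5856 * α ^ 10 * β ^ 2 - 4192 * α ^ 12 := by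
  simp only [hankel, det_fin_three, of_apply]
  norm_num [cumul]
  ring

lemma hankel_three_of_sq_eq {α β : ℝ} (h : β ^ 2 = 3 * α ^ 2) :
    hankel α β 3 = -65536 * α ^ 12 := by
  rw [hankel_three]
  -- the coefficient is the quotient of `h₃ + 2¹⁶ α¹²` by `β² - 3α²`
  linear_combination (32 * α ^ 2 * β ^ 8 - 256 * α ^ 4 * β ^ 6 - 1088 * α ^ 6 * β ^ 4
    - 4864 * α ^ 8 * β ^ 2 - 20448 * α ^ 10) * h

lemma hankel_four_neg {α β : ℝ} (hα : α ≠ 0) (h : β ^ 2 ≠ 3 * α ^ 2) : hankel α β 4 < 0 := by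
  have hβ : β ^ 2 - 3 * α ^ 2 ≠ 0 := sub_ne_zero.mpr h
  have hpos : 0 < 256 * α ^ 6 * (β ^ 2 - 3 * α ^ 2) ^ 4 * (β ^ 2 + α ^ 2) ^ 3 := by positivity
  rw [hankel_four]
  linarith

theorem hankel_determinants (α β : ℝ) :
    hankel α β 4 = -256 * α ^ 6 * (β ^ 2 - 3 * α ^ 2) ^ 4 * (β ^ 2 + α ^ 2) ^ 3 ∧
    (β ^ 2 = 3 * α ^ 2 → hankel α β 3 = -65536 * α ^ 12) ∧
    (α ≠ 0 → hankel α β 3 < 0 ∨ hankel α β 4 < 0) := by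
  refine ⟨hankel_four α β, hankel_three_of_sq_eq, fun hα => ?_⟩
  by_cases h : β ^ 2 = 3 * α ^ 2
  · left
    have : 0 < α ^ 12 := by positivity
    rw [hankel_three_of_sq_eq h]
    linarith
  · exact Or.inr (hankel_four_neg hα h)
end

section
/- For each n ≥ 1, the function F_n(z) = Σ_{k=0}^{n-1} Σ_{m=0}^{∞} cot^m(π/(2n) + kπ/n) z^m satisfies, for real z in a neighborhood of 0, the closed form F_n(z) = n(1 + z·tan(n·arctan z))/(1 + z²). -/
/-!
Let `θ_k = (2k+1)π/(2n)`, the zeros of `cos (n ·)` in `(0, π)`, and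
`χ_n(λ) = ((λ - i)^n + (λ + i)^n)/2`. Since `cot φ ∓ i = e^{∓iφ}/sin φ`, we have
`χ_n(cot φ) = cos (nφ)/sin^n φ`, so the `n` distinct numbers `cot θ_k` are all the roots of
the degree-`n` polynomial `χ_n`, and `χ_n' = n χ_{n-1}`. For small `z`, each inner series is
geometric and sums to `1/(1 - z cot θ_k)`; for `z = tan φ ≠ 0` the logarithmic derivative gives
`∑_k 1/(1 - z cot θ_k) = cot φ · χ_n'(cot φ)/χ_n(cot φ) = n cos φ cos((n-1)φ)/cos(nφ)`,
which is the closed form once `cos((n-1)φ)` is expanded around `nφ` and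
`cos² φ = 1/(1+z²)` is used.
-/

open Real Polynomial Finset Filter Topology

namespace CotPowerSum

noncomputable def chi (n : ℕ) : ℂ[X] :=
  C 2⁻¹ * ((X - C Complex.I) ^ n + (X + C Complex.I) ^ n)

lemma natDegree_chi (n : ℕ) : (chi n).natDegree = n := by
  unfold chi
  compute_degree!

lemma derivative_chi_succ (n : ℕ) : derivative (chi (n + 1)) = C ((n : ℂ) + 1) * chi n := by
  simp only [chi, derivative_mul, derivative_C, zero_mul, zero_add, derivative_pow,
    derivative_sub, derivative_X, map_add, map_natCast, map_one, add_tsub_cancel_right,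
    Nat.cast_add_one]
  ring

lemma eval_chi_cot (n : ℕ) {φ : ℝ} (hsin : sin φ ≠ 0) :
    (chi n).eval (cot φ : ℂ) = (cos (n * φ) / sin φ ^ n : ℝ) := by
  have hs : (sin φ : ℂ) ≠ 0 := by exact_mod_cast hsin
  have hcot : (cot φ : ℂ) = cos φ / sin φ := by
    rw [Complex.ofReal_cot, Complex.cot_eq_cos_div_sin, Complex.ofReal_cos, Complex.ofReal_sin]
  have hsub : (cot φ : ℂ) - Complex.I = Complex.exp (-φ * Complex.I) / sin φ := by
    rw [hcot, Complex.exp_mul_I, Complex.cos_neg, Complex.sin_neg, ← Complex.ofReal_cos,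
      ← Complex.ofReal_sin]
    field_simp
    ring
  have hadd : (cot φ : ℂ) + Complex.I = Complex.exp (φ * Complex.I) / sin φ := by
    rw [hcot, Complex.exp_mul_I, ← Complex.ofReal_cos, ← Complex.ofReal_sin]
    field_simp
  have hcos := Complex.two_cos (n * φ)
  simp only [chi, eval_mul, eval_C, eval_add, eval_pow, eval_sub, eval_X]
  rw [hsub, hadd, div_pow, div_pow, ← Complex.exp_nat_mul, ← Complex.exp_nat_mul]
  push_cast
  rw [← add_div, ← mul_div_assoc, add_comm,
    show (n : ℂ) * (-φ * Complex.I) = -(n * φ) * Complex.I by ring, ← mul_assoc, ← hcos,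
    inv_mul_cancel_left₀ two_ne_zero]

lemma injOn_cot : Set.InjOn cot (Set.Ioo 0 π) := by
  intro x ⟨hx0, hxπ⟩ y ⟨hy0, hyπ⟩ hxy
  have hsx := (sin_pos_of_pos_of_lt_pi hx0 hxπ).ne'
  have hsy := (sin_pos_of_pos_of_lt_pi hy0 hyπ).ne'
  rw [cot_eq_cos_div_sin, cot_eq_cos_div_sin, div_eq_div_iff hsx hsy] at hxy
  have h : sin (y - x) = 0 := by rw [sin_sub]; linarith
  rw [sin_eq_zero_iff_of_lt_of_lt (by linarith) (by linarith)] at h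
  linarith

noncomputable def rootAngle (n k : ℕ) : ℝ := π / (2 * n) + k * π / n

lemma rootAngle_eq (n k : ℕ) : rootAngle n k = (2 * k + 1) * π / (2 * n) := by
  rw [rootAngle]; field_simp; ring

lemma rootAngle_mem_Ioo {n k : ℕ} (hk : k < n) : rootAngle n k ∈ Set.Ioo 0 π := by
  have hn : (0 : ℝ) < n := by exact_mod_cast (Nat.zero_le k).trans_lt hk
  have hk' : (k : ℝ) + 1 ≤ n := by exact_mod_cast hk
  rw [rootAngle_eq, Set.mem_Ioo, div_lt_iff₀ (by positivity)]
  constructor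
  · positivity
  · nlinarith [pi_pos]

lemma cos_nat_mul_rootAngle {n k : ℕ} (hk : k < n) : cos (n * rootAngle n k) = 0 := by
  have hn : (n : ℝ) ≠ 0 := by exact_mod_cast ((Nat.zero_le k).trans_lt hk).ne'
  rw [cos_eq_zero_iff]
  exact ⟨k, by rw [rootAngle_eq]; push_cast; field_simp⟩

lemma rootAngle_injective {n : ℕ} (hn : n ≠ 0) : Function.Injective (rootAngle n) := by
  intro j k h
  have hn : (n : ℝ) ≠ 0 := by exact_mod_cast hn
  rw [rootAngle_eq, rootAngle_eq, div_left_inj' (by positivity), mul_left_inj' pi_ne_zero] at h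
  exact_mod_cast (by linarith : (j : ℝ) = k)

lemma roots_chi (n : ℕ) :
    (chi n).roots = (range n).val.map fun k ↦ (cot (rootAngle n k) : ℂ) := by
  have hnodup : ((range n).val.map fun k ↦ (cot (rootAngle n k) : ℂ)).Nodup := by
    refine (range n).nodup.map_on fun j hj k hk h ↦ ?_
    have hn : n ≠ 0 := (Nat.zero_le k).trans_lt (mem_range.1 hk) |>.ne'
    exact rootAngle_injective hn <| injOn_cot (rootAngle_mem_Ioo (mem_range.1 hj))
      (rootAngle_mem_Ioo (mem_range.1 hk)) (Complex.ofReal_injective h)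
  have hsub : ((range n).val.map fun k ↦ (cot (rootAngle n k) : ℂ)) ≤ (chi n).roots := by
    refine (Multiset.le_iff_subset hnodup).2 fun x hx ↦ ?_
    obtain ⟨k, hk, rfl⟩ := Multiset.mem_map.1 hx
    have hk : k < n := mem_range.1 hk
    have hsin := (sin_pos_of_pos_of_lt_pi (rootAngle_mem_Ioo hk).1 (rootAngle_mem_Ioo hk).2).ne'
    refine (mem_roots (ne_zero_of_natDegree_gt (p := chi n) (n := 0) ?_)).2 ?_
    · rw [natDegree_chi]; omega
    · rw [IsRoot, eval_chi_cot n hsin, cos_nat_mul_rootAngle hk, zero_div, Complex.ofReal_zero]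
  refine (Multiset.eq_of_le_of_card_le hsub ?_).symm
  rw [Multiset.card_map, card_val, card_range]
  exact (card_roots' (chi n)).trans_eq (natDegree_chi n)

lemma sum_inv_cot_sub_cot (n : ℕ) {φ : ℝ} (hsin : sin φ ≠ 0)
    (hcos : cos ((n + 1) * φ) ≠ 0) :
    ∑ k ∈ range (n + 1), (cot φ - cot (rootAngle (n + 1) k))⁻¹ =
      (n + 1) * sin φ * cos (n * φ) / cos ((n + 1) * φ) := by
  have heval := eval_chi_cot (n + 1) hsin
  have hne : (chi (n + 1)).eval (cot φ : ℂ) ≠ 0 := by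
    rw [heval, Complex.ofReal_ne_zero]
    push_cast
    exact div_ne_zero hcos (pow_ne_zero _ hsin)
  have h := (IsAlgClosed.splits (chi (n + 1))).eval_derivative_div_eval_of_ne_zero hne
  rw [roots_chi, Multiset.map_map, derivative_chi_succ, eval_mul, eval_C, eval_chi_cot n hsin,
    heval] at h
  apply Complex.ofReal_injective
  rw [Complex.ofReal_sum, sum_eq_multiset_sum]
  simp only [Function.comp_def, one_div] at h
  push_cast at h ⊢
  rw [← h]
  have hs : Complex.sin φ ≠ 0 := by exact_mod_cast hsin
  have hc : Complex.cos ((n + 1) * φ) ≠ 0 := by exact_mod_cast hcos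
  field_simp
  ring

lemma sum_inv_one_sub_cot_mul (n : ℕ) {z : ℝ} (hcos : cos (n * arctan z) ≠ 0) :
    ∑ k ∈ range n, (1 - cot (rootAngle n k) * z)⁻¹ =
      n * (1 + z * tan (n * arctan z)) / (1 + z ^ 2) := by
  rcases eq_or_ne z 0 with rfl | hz
  · simp
  obtain _ | n := n
  · simp
  set φ := arctan z
  have hc : 0 < cos φ := cos_arctan_pos z
  have hsin : sin φ = z * cos φ := by
    rw [← tan_arctan z, tan_eq_sin_div_cos, div_mul_cancel₀ _ hc.ne']
  have hcot : z⁻¹ = cot φ := by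
    rw [cot_eq_cos_div_sin, hsin]; field_simp
  have hc2 : cos φ ^ 2 * (1 + z ^ 2) = 1 := by
    rw [cos_sq_arctan]; field_simp
  have hsum : ∑ k ∈ range (n + 1), (1 - cot (rootAngle (n + 1) k) * z)⁻¹ =
      z⁻¹ * ∑ k ∈ range (n + 1), (cot φ - cot (rootAngle (n + 1) k))⁻¹ := by
    rw [← hcot, mul_sum]
    refine sum_congr rfl fun k _ ↦ ?_
    rw [← mul_inv, mul_sub, mul_inv_cancel₀ hz, mul_comm]
  have hs : sin φ ≠ 0 := by rw [hsin]; positivity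
  push_cast at hcos ⊢
  rw [hsum, sum_inv_cot_sub_cot n hs hcos, hcot, cot_eq_cos_div_sin,
    tan_eq_sin_div_cos, show (n : ℝ) * φ = (n + 1) * φ - φ by ring, cos_sub]
  field_simp
  rw [hsin]
  linear_combination (cos ((n + 1) * φ) + z * sin ((n + 1) * φ)) * hc2

lemma eventually_cos_ne_zero_and_abs_lt_one (n : ℕ) :
    ∀ᶠ z in 𝓝 (0 : ℝ),
      cos (n * arctan z) ≠ 0 ∧ ∀ k ∈ range n, |cot (rootAngle n k) * z| < 1 := by
  refine .and ?_ (eventually_all_finset _ |>.2 fun k _ ↦ ?_)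
  · have h : Tendsto (fun z ↦ cos (n * arctan z)) (𝓝 0) (𝓝 1) := by
      have hc : Continuous fun z ↦ cos (n * arctan z) := by fun_prop
      simpa using hc.tendsto 0
    exact h.eventually_ne one_ne_zero
  · have h : Tendsto (fun z ↦ |cot (rootAngle n k) * z|) (𝓝 0) (𝓝 0) := by
      have hc : Continuous fun z ↦ |cot (rootAngle n k) * z| := by fun_prop
      simpa using hc.tendsto 0
    exact h.eventually_lt_const one_pos

end CotPowerSum

theorem cotangent_power_sum_generating_function_general (n : ℕ) :
    ∃ ε > (0 : ℝ), ∀ z : ℝ, |z| < ε →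
      (∑ k ∈ Finset.range n, ∑' m : ℕ,
          Real.cot (π / (2 * n) + k * π / n) ^ m * z ^ m) =
        n * (1 + z * Real.tan (n * Real.arctan z)) / (1 + z ^ 2) := by
  obtain ⟨ε, hε, h⟩ := Metric.eventually_nhds_iff.1
    (CotPowerSum.eventually_cos_ne_zero_and_abs_lt_one n)
  refine ⟨ε, hε, fun z hz ↦ ?_⟩
  obtain ⟨hcos, hgeom⟩ := h (by rwa [dist_zero_right])
  rw [← CotPowerSum.sum_inv_one_sub_cot_mul n hcos]
  refine sum_congr rfl fun k hk ↦ ?_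
  simp_rw [← mul_pow]
  exact tsum_geometric_of_abs_lt_one (hgeom k hk)

/-- The generating function of the cotangent power sums:
`F_n(z) = Σ_{k<n} Σ_m cot^m(π/(2n)+kπ/n) z^m = n(1 + z tan(n arctan z))/(1+z²)`
for real `z` near `0`. -/
theorem cotangent_power_sum_generating_function (n : ℕ) (hn : 1 ≤ n) :
    ∃ ε > (0 : ℝ), ∀ z : ℝ, |z| < ε →
      (∑ k ∈ Finset.range n, ∑' m : ℕ,
          Real.cot (π / (2 * n) + k * π / n) ^ m * z ^ m) =
        n * (1 + z * Real.tan (n * Real.arctan z)) / (1 + z ^ 2) :=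
  cotangent_power_sum_generating_function_general n
end
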